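/- arXiv:1612.04578 — 2 statements merged into one kernel-verified Lean document; each statement's English description precedes it below -/
import Mathlib

section
/- Let U ⊆ ℝⁿ be a bounded open set whose closure is C¹-diffeomorphic to a closed ball via φ : cl(U) → cl(B(0,r)) with φ mapping U onto B(0,r), and suppose 0 ∈ B(0,r). Let μ > 0, let O ⊆ U \ B_μ(∂U), and let η > 0. Then there exists ρ > 0 such that for every θ ∈ SO(n) with 0 < ‖θ − id‖ < ρ there exists a diffeomorphism ζ : U → U with the following properties, where Ξ_θ := φ⁻¹ ∘ θ ∘ φ : U → U: (i) ζ(B_{μ/4}(O)) ⊆ B_{μ/2}(O) and ζ(y) = Ξ_θ(y) for all y ∈ B_{μ/4}(O); (ii) ζ(y) = y for all y ∈ U \ B_{3μ/4}(O); (iii) ‖ζ − id‖_{C¹(U)} ≤ η. -/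
/-!
`ζ` is the identity plus a cut-off of `Ξ_θ - id`: `ζ y = y + g y • (Ξ_θ y - y)`, where the smooth
`g` is `1` on the closed `μ/4`-neighbourhood of `O` and vanishes off its `μ/2`-neighbourhood, which
lies in `U` because `O` keeps distance `μ` from `∂U`.

As `θ → id`, `Ξ_θ - id → 0` in `C¹` uniformly on `U`. Indeed `D(φ⁻¹)` is invertible on the whole
closed ball (since `φ ∘ φ⁻¹ = id` there), so `(θ, z) ↦ φ⁻¹ (θ z)` and
`(θ, z) ↦ D(φ⁻¹)(θ z) ∘ θ ∘ D(φ⁻¹)(z)⁻¹ = DΞ_θ(φ⁻¹ z)` are uniformly continuous on the compact set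
`{‖θ‖ ≤ 1} × cl B(0, r)`. Hence for `θ` close to `id` the map `ζ - id` is `C¹`-small. Once its
derivative has norm `< 1`, `ζ` is a global homeomorphism with `C¹` inverse, and once it moves points
by less than `μ/4` the mapping properties follow.
-/

open MeasureTheory Metric Set

noncomputable section

abbrev Euc (n : ℕ) := EuclideanSpace ℝ (Fin n)

def C1Dist (n : ℕ) (U : Set (Euc n)) (f g : Euc n → Euc n) : ℝ :=
  (⨆ x : U, ‖f x - g x‖) + (⨆ x : U, ‖fderiv ℝ f x - fderiv ℝ g x‖)

/-- Operator-norm distance from a linear isometry equivalence of ℝⁿ to the identity. -/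
def opDistId (n : ℕ) (θ : Euc n ≃ₗᵢ[ℝ] Euc n) : ℝ :=
  ‖θ.toLinearIsometry.toContinuousLinearMap - ContinuousLinearMap.id ℝ (Euc n)‖

/-- `θ` belongs to `SO(n)`: it is a linear isometry of ℝⁿ with determinant 1. -/
def InSO (n : ℕ) (θ : Euc n ≃ₗᵢ[ℝ] Euc n) : Prop :=
  LinearMap.det (θ.toLinearEquiv : Euc n →ₗ[ℝ] Euc n) = 1

open Filter Topology
open scoped NNReal Manifold

lemma ContinuousOn.ringInverse {X R : Type*} [TopologicalSpace X] [NormedRing R]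
    [HasSummableGeomSeries R] {f : X → R} {s : Set X} (hf : ContinuousOn f s)
    (hunit : ∀ x ∈ s, IsUnit (f x)) : ContinuousOn (fun x => Ring.inverse (f x)) s := fun x hx => by
  have h := NormedRing.inverse_continuousAt (hunit x hx).unit
  rw [(hunit x hx).unit_spec] at h
  exact h.comp_continuousWithinAt (hf x hx)

lemma mapsTo_thickening_of_dist_lt {α : Type*} [PseudoMetricSpace α] {f : α → α} {ε δ δ' : ℝ}
    (hf : ∀ x, dist (f x) x < ε) (hδ : ε + δ ≤ δ') (s : Set α) :
    MapsTo f (thickening δ s) (thickening δ' s) := fun x hx =>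
  thickening_mono hδ s (thickening_thickening_subset ε δ s (mem_thickening_iff.2 ⟨x, hx, hf x⟩))

lemma Equiv.bijOn_of_mapsTo_of_eq_self_of_notMem {α : Type*} (e : α ≃ α) {S U : Set α}
    (hSU : S ⊆ U) (hS : MapsTo e S U) (hfix : ∀ x ∉ S, e x = x) : BijOn e U U := by
  refine ⟨fun x hx => ?_, e.injective.injOn, fun z hz => ⟨e.symm z, ?_, e.apply_symm_apply z⟩⟩
  · by_cases hxS : x ∈ S
    · exact hS hxS
    · rwa [hfix x hxS]
  · by_cases hzS : e.symm z ∈ S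
    · exact hSU hzS
    · have h := hfix _ hzS
      rw [e.apply_symm_apply] at h
      rwa [← h]

section NormedSpace

variable {E : Type*} [NormedAddCommGroup E] [NormedSpace ℝ E]

lemma ball_subset_of_notMem_thickening_frontier {U : Set E} (hU : IsOpen U) {o : E}
    (ho : o ∈ U) {μ : ℝ} (h : o ∉ thickening μ (frontier U)) : ball o μ ⊆ U := by
  rcases le_or_gt μ 0 with hμ | hμ
  · simp [ball_eq_empty.2 hμ]
  refine (convex_ball o μ).isPreconnected.subset_of_closure_inter_subset hU
    ⟨o, mem_ball_self hμ, ho⟩ ?_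
  rintro z ⟨hzU, hz⟩
  rw [closure_eq_self_union_frontier] at hzU
  refine hzU.resolve_right fun hzf => h (mem_thickening_iff.2 ⟨z, hzf, ?_⟩)
  rwa [mem_ball, dist_comm] at hz

lemma thickening_subset_of_subset_diff_thickening_frontier {U O : Set E} (hU : IsOpen U)
    {μ : ℝ} (hO : O ⊆ U \ thickening μ (frontier U)) : thickening μ O ⊆ U := by
  intro y hy
  obtain ⟨o, ho, hyo⟩ := mem_thickening_iff.1 hy
  exact ball_subset_of_notMem_thickening_frontier hU (hO ho).1 (hO ho).2 (mem_ball.2 hyo)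

lemma ContinuousLinearMap.norm_apply_le_of_norm_le_one {T : E →L[ℝ] E} (hT : ‖T‖ ≤ 1)
    (z : E) : ‖T z‖ ≤ ‖z‖ :=
  (T.le_of_opNorm_le hT z).trans_eq (one_mul _)

lemma continuousOn_comp_apply_closedBall_prod {F : Type*} [TopologicalSpace F] {r : ℝ}
    {f : E → F} (hf : ContinuousOn f (closedBall 0 r)) :
    ContinuousOn (fun p : (E →L[ℝ] E) × E => f (p.1 p.2))
      (closedBall 0 1 ×ˢ closedBall 0 r) := by
  refine hf.comp (continuous_fst.clm_apply continuous_snd).continuousOn ?_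
  rintro ⟨T, z⟩ ⟨hT, hz⟩
  simp only [mem_closedBall_zero_iff] at hT hz ⊢
  exact (T.norm_apply_le_of_norm_le_one hT z).trans hz

lemma comp_fderivWithin_eq_id_of_leftInvOn {f g : E → E} {s t : Set E} {z : E} (hz : z ∈ t)
    (ht : UniqueDiffWithinAt ℝ t z) (hf : DifferentiableWithinAt ℝ f s (g z))
    (hg : DifferentiableWithinAt ℝ g t z) (hgst : MapsTo g t s) (hfg : LeftInvOn f g t) :
    (fderivWithin ℝ f s (g z)).comp (fderivWithin ℝ g t z) = ContinuousLinearMap.id ℝ E :=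
  ht.eq ((hf.hasFDerivWithinAt.comp z hg.hasFDerivWithinAt hgst).congr
    (fun _ hw => (hfg hw).symm) (hfg hz).symm) (hasFDerivWithinAt_id z t)

lemma norm_fderiv_smul_le {g : E → ℝ} {F : E → E} {x : E} (hg : DifferentiableAt ℝ g x)
    (hF : DifferentiableAt ℝ F x) :
    ‖fderiv ℝ (fun y => g y • F y) x‖ ≤ ‖g x‖ * ‖fderiv ℝ F x‖ + ‖fderiv ℝ g x‖ * ‖F x‖ := by
  rw [fderiv_fun_smul hg hF]
  refine (norm_add_le _ _).trans (add_le_add (norm_smul_le _ _) ?_)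
  rw [ContinuousLinearMap.norm_smulRight_apply]

lemma contDiff_smul_of_tsupport_subset {g : E → ℝ} {F : E → E} {U : Set E} (hU : IsOpen U)
    {n : WithTop ℕ∞} (hg : ContDiff ℝ n g) (hF : ContDiffOn ℝ n F U) (hgU : tsupport g ⊆ U) :
    ContDiff ℝ n (fun x => g x • F x) := by
  refine contDiff_iff_contDiffAt.2 fun x => ?_
  by_cases hx : x ∈ U
  · exact hg.contDiffAt.smul (hF.contDiffAt (hU.mem_nhds hx))
  · refine (contDiffAt_const (c := (0 : E))).congr_of_eventuallyEq ?_
    filter_upwards [notMem_tsupport_iff_eventuallyEq.1 fun h => hx (hgU h)] with y hy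
    simp [hy]

lemma norm_smul_le_of_tsupport_subset {g : E → ℝ} {F : E → E} {U : Set E} {ε : ℝ}
    (hε : 0 ≤ ε) (hgU : tsupport g ⊆ U) (hg : ∀ x, ‖g x‖ ≤ 1) (hF : ∀ x ∈ U, ‖F x‖ ≤ ε)
    (x : E) : ‖g x • F x‖ ≤ ε := by
  by_cases hx : x ∈ U
  · rw [norm_smul]
    exact (mul_le_mul (hg x) (hF x hx) (norm_nonneg _) zero_le_one).trans_eq (one_mul ε)
  · rwa [image_eq_zero_of_notMem_tsupport fun h => hx (hgU h), zero_smul, norm_zero]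

lemma norm_fderiv_smul_le_of_tsupport_subset {g : E → ℝ} {F : E → E} {U : Set E} {ε L : ℝ}
    (hU : IsOpen U) (hε : 0 ≤ ε) (hgd : Differentiable ℝ g) (hFd : DifferentiableOn ℝ F U)
    (hgU : tsupport g ⊆ U) (hg : ∀ x, ‖g x‖ ≤ 1) (hL : ∀ x, ‖fderiv ℝ g x‖ ≤ L)
    (hF : ∀ x ∈ U, ‖F x‖ ≤ ε) (hDF : ∀ x ∈ U, ‖fderiv ℝ F x‖ ≤ ε) (x : E) :
    ‖fderiv ℝ (fun y => g y • F y) x‖ ≤ (1 + L) * ε := by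
  have hL0 : 0 ≤ L := (norm_nonneg _).trans (hL x)
  by_cases hx : x ∈ U
  · calc ‖fderiv ℝ (fun y => g y • F y) x‖
        ≤ ‖g x‖ * ‖fderiv ℝ F x‖ + ‖fderiv ℝ g x‖ * ‖F x‖ :=
          norm_fderiv_smul_le (hgd x) (hFd.differentiableAt (hU.mem_nhds hx))
      _ ≤ 1 * ε + L * ε := by gcongr; exacts [hg x, hDF x hx, hL x, hF x hx]
      _ = (1 + L) * ε := by ring
  · rw [fderiv_of_notMem_tsupport ℝ fun h => hx (hgU (tsupport_smul_subset_left _ _ h)),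
      norm_zero]
    positivity

lemma fderiv_fun_id_add {h : E → E} {x : E} (hh : DifferentiableAt ℝ h x) :
    fderiv ℝ (fun y => y + h y) x = ContinuousLinearMap.id ℝ E + fderiv ℝ h x :=
  ((hasFDerivAt_id x).add hh.hasFDerivAt).fderiv

theorem exists_homeomorph_add_of_norm_fderiv_le [CompleteSpace E] {h : E → E}
    (hh : ContDiff ℝ 1 h) {c : ℝ≥0} (hc : c < 1) (hDh : ∀ x, ‖fderiv ℝ h x‖ ≤ c) :
    ∃ e : E ≃ₜ E, ⇑e = (fun x => x + h x) ∧ ContDiff ℝ 1 e.symm := by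
  have hdiff := hh.differentiable one_ne_zero
  have hlip : LipschitzWith c h :=
    lipschitzWith_of_nnnorm_fderiv_le hdiff fun x => by exact_mod_cast hDh x
  have happrox : ApproximatesLinearOn (fun x => x + h x)
      ((ContinuousLinearEquiv.refl ℝ E : E ≃L[ℝ] E) : E →L[ℝ] E) univ c := by
    intro x _ y _
    simpa [dist_eq_norm, add_sub_add_comm] using hlip.dist_le_mul x y
  have hc' : Subsingleton E ∨
      c < ‖(((ContinuousLinearEquiv.refl ℝ E).symm : E ≃L[ℝ] E) : E →L[ℝ] E)‖₊⁻¹ := by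
    rcases subsingleton_or_nontrivial E with hE | hE
    · exact Or.inl hE
    · right; simpa using hc
  have hDh' : ∀ x, ‖-fderiv ℝ h x‖ < 1 := fun x => by
    rw [norm_neg]; exact (hDh x).trans_lt (by exact_mod_cast hc)
  refine ⟨happrox.toHomeomorph _ hc', rfl, ?_⟩
  refine (happrox.toHomeomorph _ hc').contDiff_symm
    (f₀' := fun x => ContinuousLinearEquiv.unitsEquiv ℝ E (Units.oneSub _ (hDh' x)))
    (fun x => ?_) (contDiff_id.add hh)
  have hD : ((Units.oneSub _ (hDh' x) : (E →L[ℝ] E)ˣ) : E →L[ℝ] E) =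
      ContinuousLinearMap.id ℝ E + fderiv ℝ h x := by
    rw [Units.val_oneSub, sub_neg_eq_add]; rfl
  change HasFDerivAt _ ((Units.oneSub _ (hDh' x) : (E →L[ℝ] E)ˣ) : E →L[ℝ] E) x
  exact hD ▸ (hasFDerivAt_id x).add (hdiff x).hasFDerivAt

theorem exists_homeomorph_add_smul_of_norm_le {g : E → ℝ} {F : E → E} {U : Set E} {ε L : ℝ}
    [CompleteSpace E] (hU : IsOpen U) (hg : ContDiff ℝ 1 g) (hg1 : ∀ x, ‖g x‖ ≤ 1)
    (hL : ∀ x, ‖fderiv ℝ g x‖ ≤ L) (hgU : tsupport g ⊆ U) (hF : ContDiffOn ℝ 1 F U)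
    (hε : 0 ≤ ε) (hF0 : ∀ x ∈ U, ‖F x‖ ≤ ε) (hF1 : ∀ x ∈ U, ‖fderiv ℝ F x‖ ≤ ε)
    (hLε : (1 + L) * ε < 1) :
    ∃ e : E ≃ₜ E, ⇑e = (fun x => x + g x • F x) ∧ ContDiff ℝ 1 e ∧ ContDiff ℝ 1 e.symm ∧
      ∀ x, ‖e x - x‖ ≤ ε ∧ ‖fderiv ℝ e x - ContinuousLinearMap.id ℝ E‖ ≤ (1 + L) * ε := by
  have hh : ContDiff ℝ 1 (fun x => g x • F x) := contDiff_smul_of_tsupport_subset hU hg hF hgU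
  have hDh := norm_fderiv_smul_le_of_tsupport_subset hU hε (hg.differentiable one_ne_zero)
    (hF.differentiableOn one_ne_zero) hgU hg1 hL hF0 hF1
  obtain ⟨e, he, he_symm⟩ := exists_homeomorph_add_of_norm_fderiv_le hh
    (c := ⟨(1 + L) * ε, (hDh 0).trans' (norm_nonneg _)⟩) hLε hDh
  refine ⟨e, he, he ▸ contDiff_id.add hh, he_symm, fun x => ⟨?_, ?_⟩⟩
  · simpa [he] using norm_smul_le_of_tsupport_subset hε hgU hg1 hF0 x
  · rw [he, fderiv_fun_id_add (hh.differentiable one_ne_zero x), add_sub_cancel_left]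
    exact hDh x

section Conjugation

variable {U : Set E} {r : ℝ} {φ φinv : E → E}

lemma fderiv_eq_ring_inverse (hUopen : IsOpen U) (hφ : DifferentiableOn ℝ φ U)
    (hφinv : DifferentiableOn ℝ φinv (closedBall 0 r)) (hφU : MapsTo φ U (closedBall 0 r))
    (hinv : LeftInvOn φinv φ U)
    (hunit : ∀ z ∈ closedBall 0 r, IsUnit (fderivWithin ℝ φinv (closedBall 0 r) z))
    {x : E} (hx : x ∈ U) :
    fderiv ℝ φ x = Ring.inverse (fderivWithin ℝ φinv (closedBall 0 r) (φ x)) := by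
  have h := comp_fderivWithin_eq_id_of_leftInvOn hx (hUopen.uniqueDiffWithinAt hx)
    (hφinv _ (hφU hx)) (hφ x hx) hφU hinv
  rw [fderivWithin_of_isOpen hUopen hx] at h
  have h' : fderivWithin ℝ φinv (closedBall 0 r) (φ x) * fderiv ℝ φ x = 1 := h
  rw [← Ring.inverse_mul_cancel_left _ (fderiv ℝ φ x) (hunit _ (hφU hx)), h', mul_one]

lemma contDiffAt_and_hasFDerivAt_conj (hUopen : IsOpen U) (hφ : ContDiffOn ℝ 1 φ (closure U))
    (hφinv : ContDiffOn ℝ 1 φinv (closedBall 0 r)) (hφU : MapsTo φ U (ball 0 r))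
    {T : E →L[ℝ] E} (hT : ‖T‖ ≤ 1) {x : E} (hx : x ∈ U) :
    ContDiffAt ℝ 1 (fun y => φinv (T (φ y))) x ∧
      HasFDerivAt (fun y => φinv (T (φ y)))
        ((fderivWithin ℝ φinv (closedBall 0 r) (T (φ x))).comp (T.comp (fderiv ℝ φ x))) x := by
  have hTx : T (φ x) ∈ ball 0 r := mem_ball_zero_iff.2
    ((T.norm_apply_le_of_norm_le_one hT _).trans_lt (mem_ball_zero_iff.1 (hφU hx)))
  have hφx : ContDiffAt ℝ 1 φ x :=
    hφ.contDiffAt (mem_of_superset (hUopen.mem_nhds hx) subset_closure)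
  have hφinvTx : ContDiffAt ℝ 1 φinv (T (φ x)) :=
    hφinv.contDiffAt (closedBall_mem_nhds_of_mem hTx)
  refine ⟨hφinvTx.comp x (T.contDiff.contDiffAt.comp x hφx), ?_⟩
  rw [fderivWithin_of_mem_nhds (closedBall_mem_nhds_of_mem hTx)]
  exact (hφinvTx.differentiableAt one_ne_zero).hasFDerivAt.comp x
    (T.hasFDerivAt.comp x (hφx.differentiableAt one_ne_zero).hasFDerivAt)

end Conjugation

section FiniteDimensional

variable [FiniteDimensional ℝ E]

lemma ContinuousLinearMap.isUnit_of_comp_eq_id {A B : E →L[ℝ] E}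
    (h : A.comp B = ContinuousLinearMap.id ℝ E) : IsUnit B := by
  rw [ContinuousLinearMap.isUnit_iff_isUnit_toLinearMap]
  refine IsUnit.of_mul_eq_one_right (A : E →ₗ[ℝ] E) ?_
  ext x
  exact congrArg (fun T : E →L[ℝ] E => T x) h

lemma isUnit_fderivWithin_of_leftInvOn {f g : E → E} {s t : Set E} (ht : UniqueDiffOn ℝ t)
    (hf : DifferentiableOn ℝ f s) (hg : DifferentiableOn ℝ g t) (hgst : MapsTo g t s)
    (hfg : LeftInvOn f g t) {z : E} (hz : z ∈ t) : IsUnit (fderivWithin ℝ g t z) :=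
  ContinuousLinearMap.isUnit_of_comp_eq_id
    (comp_fderivWithin_eq_id_of_leftInvOn hz (ht z hz) (hf _ (hgst hz)) (hg z hz) hgst hfg)

lemma tendstoUniformlyOn_of_continuousOn_closedBall_prod {F : Type*} [UniformSpace F] {r : ℝ}
    {Φ : (E →L[ℝ] E) → E → F} (hΦ : ContinuousOn ↿Φ (closedBall 0 1 ×ˢ closedBall 0 r)) :
    TendstoUniformlyOn Φ (Φ (ContinuousLinearMap.id ℝ E))
      (𝓝[closedBall 0 1] (ContinuousLinearMap.id ℝ E)) (closedBall 0 r) :=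
  (((isCompact_closedBall _ _).prod (isCompact_closedBall _ _)).uniformContinuousOn_of_continuous
    hΦ).tendstoUniformlyOn (by simpa using ContinuousLinearMap.norm_id_le)

theorem exists_contDiff_cutoff_thickening {O : Set E} (hO : Bornology.IsBounded O) {a b : ℝ}
    (ha : 0 ≤ a) (hab : a < b) :
    ∃ g : E → ℝ, ContDiff ℝ 1 g ∧ (∀ x, g x ∈ Icc 0 1) ∧ EqOn g 1 (cthickening a O) ∧
      tsupport g ⊆ thickening b O ∧ ∃ L, ∀ x, ‖fderiv ℝ g x‖ ≤ L := by
  obtain ⟨m, ham, hmb⟩ := exists_between hab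
  obtain ⟨f, hf0, hf1, hf01⟩ := exists_contMDiffMap_zero_one_of_isClosed (n := 1) 𝓘(ℝ, E)
    isOpen_thickening.isClosed_compl isClosed_cthickening
    (disjoint_compl_left_iff_subset.2 (cthickening_subset_thickening' (ha.trans_lt ham) ham O))
  have hf : ContDiff ℝ 1 f := contMDiff_iff_contDiff.1 f.contMDiff
  have hsupp : tsupport f ⊆ cthickening m O :=
    (closure_mono (Function.support_subset_iff'.2 fun x hx => hf0 hx)).trans
      (closure_thickening_subset_cthickening m O)
  have hcpt : HasCompactSupport f :=
    (isCompact_of_isClosed_isBounded isClosed_cthickening hO.cthickening).of_isClosed_subset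
      (isClosed_tsupport f) hsupp
  refine ⟨f, hf, hf01, hf1,
    hsupp.trans (cthickening_subset_thickening' ((ha.trans_lt ham).trans hmb) hmb O), ?_⟩
  exact (hf.continuous_fderiv one_ne_zero).bounded_above_of_compact_support
    (hcpt.fderiv (𝕜 := ℝ))

theorem exists_localized_homeomorph_of_C1_small {U O : Set E} (hU : IsOpen U)
    (hO : Bornology.IsBounded O) {μ η : ℝ} (hμ : 0 < μ) (hη : 0 < η)
    (hOU : thickening μ O ⊆ U) :
    ∃ ε > 0, ∀ F : E → E, ContDiffOn ℝ 1 F U →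
      (∀ x ∈ U, ‖F x‖ < ε ∧ ‖fderiv ℝ F x‖ < ε) →
      ∃ e : E ≃ₜ E, ContDiff ℝ 1 e ∧ ContDiff ℝ 1 e.symm ∧ BijOn e U U ∧
        e '' thickening (μ/4) O ⊆ thickening (μ/2) O ∧
        (∀ y ∈ thickening (μ/4) O, e y = y + F y) ∧
        (∀ y ∉ thickening (3*μ/4) O, e y = y) ∧
        ∀ x, ‖e x - x‖ ≤ η ∧ ‖fderiv ℝ e x - ContinuousLinearMap.id ℝ E‖ ≤ η := by
  obtain ⟨g, hg, hg01, hg1, hgsupp, L, hL⟩ :=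
    exists_contDiff_cutoff_thickening hO (a := μ/4) (b := μ/2) (by positivity) (by linarith)
  have hL0 : 0 ≤ L := (norm_nonneg _).trans (hL 0)
  -- With `ε = δ / (1 + L)`, the derivative of `e - id` is bounded by `(1 + L) ε = δ`.
  set δ := min (μ/8) (min η (1/2))
  have hδ : 0 < δ := by positivity
  have hδμ : δ ≤ μ/8 := min_le_left _ _
  have hδη : δ ≤ η := (min_le_right _ _).trans (min_le_left _ _)
  have hδ1 : δ < 1 := (min_le_right _ _).trans_lt ((min_le_right _ _).trans_lt (by norm_num))
  have hεδ : δ / (1 + L) ≤ δ := div_le_self hδ.le (by linarith)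
  have hLε : (1 + L) * (δ / (1 + L)) = δ := mul_div_cancel₀ δ (by positivity)
  refine ⟨δ / (1 + L), by positivity, fun F hFC hF => ?_⟩
  obtain ⟨e, he, hec, he_symm, hsmall⟩ := exists_homeomorph_add_smul_of_norm_le hU hg
    (fun x => by rw [Real.norm_of_nonneg (hg01 x).1]; exact (hg01 x).2) hL
    (hgsupp.trans ((thickening_mono (by linarith) O).trans hOU)) hFC (by positivity)
    (fun x hx => (hF x hx).1.le) (fun x hx => (hF x hx).2.le) (by rw [hLε]; exact hδ1)
  have hmove : ∀ x, dist (e x) x < μ/4 := fun x => by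
    rw [dist_eq_norm]; linarith [(hsmall x).1]
  have hfix : ∀ x ∉ thickening (μ/2) O, e x = x := fun x hx => by
    simp [he, image_eq_zero_of_notMem_tsupport fun h => hx (hgsupp h)]
  refine ⟨e, hec, he_symm, e.toEquiv.bijOn_of_mapsTo_of_eq_self_of_notMem
      ((thickening_mono (by linarith) O).trans hOU)
      ((mapsTo_thickening_of_dist_lt hmove le_rfl O).mono_right
        ((thickening_mono (by linarith) O).trans hOU)) hfix,
    (mapsTo_thickening_of_dist_lt hmove (by linarith) O).image_subset,
    fun y hy => by simp [he, hg1 (thickening_subset_cthickening _ _ hy)],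
    fun y hy => hfix y fun h => hy (thickening_mono (by linarith) O h),
    fun x => ⟨(hsmall x).1.trans (hεδ.trans hδη), (hsmall x).2.trans (hLε.trans_le hδη)⟩⟩

theorem eventually_conj_sub_id_C1_small {U : Set E} {r : ℝ} {φ φinv : E → E} (hr : 0 < r)
    (hUopen : IsOpen U) (hφ : ContDiffOn ℝ 1 φ (closure U))
    (hφinv : ContDiffOn ℝ 1 φinv (closedBall 0 r))
    (hφinv_maps : MapsTo φinv (closedBall 0 r) (closure U))
    (hinv : InvOn φinv φ (closure U) (closedBall 0 r)) (hφU : MapsTo φ U (ball 0 r))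
    {ε : ℝ} (hε : 0 < ε) :
    ∀ᶠ T in 𝓝[closedBall 0 1] (ContinuousLinearMap.id ℝ E),
      ContDiffOn ℝ 1 (fun y => φinv (T (φ y)) - y) U ∧
      ∀ x ∈ U, ‖φinv (T (φ x)) - x‖ < ε ∧ ‖fderiv ℝ (fun y => φinv (T (φ y)) - y) x‖ < ε := by
  set K := closedBall (0 : E) r
  set G := fderivWithin ℝ φinv K
  have hK : UniqueDiffOn ℝ K := uniqueDiffOn_convex (convex_closedBall 0 r)
    (by simpa [K, interior_closedBall _ hr.ne'] using hr)
  have hG : ContinuousOn G K := hφinv.continuousOn_fderivWithin hK le_rfl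
  have hGunit : ∀ z ∈ K, IsUnit (G z) := fun z hz =>
    isUnit_fderivWithin_of_leftInvOn hK (hφ.differentiableOn one_ne_zero)
      (hφinv.differentiableOn one_ne_zero) hφinv_maps hinv.2 hz
  have hφU' : MapsTo φ U K := hφU.mono_right ball_subset_closedBall
  have hC0 := tendstoUniformlyOn_of_continuousOn_closedBall_prod
    (Φ := fun T z => φinv (T z)) (continuousOn_comp_apply_closedBall_prod hφinv.continuousOn)
  have hC1 := tendstoUniformlyOn_of_continuousOn_closedBall_prod
    (Φ := fun T z => (G (T z)).comp (T.comp (Ring.inverse (G z))))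
    ((continuousOn_comp_apply_closedBall_prod hG).clm_comp
      (continuous_fst.continuousOn.clm_comp ((hG.ringInverse hGunit).comp
        continuous_snd.continuousOn fun p hp => hp.2)))
  filter_upwards [Metric.tendstoUniformlyOn_iff.1 hC0 ε hε,
    Metric.tendstoUniformlyOn_iff.1 hC1 ε hε, self_mem_nhdsWithin] with T hT0 hT1 hT
  have hT : ‖T‖ ≤ 1 := mem_closedBall_zero_iff.1 hT
  refine ⟨fun x hx => ((contDiffAt_and_hasFDerivAt_conj hUopen hφ hφinv hφU hT hx).1.sub
    contDiffAt_id).contDiffWithinAt, fun x hx => ⟨?_, ?_⟩⟩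
  · simpa [dist_eq_norm', hinv.1 (subset_closure hx)] using hT0 (φ x) (hφU' hx)
  · have hDφ := fderiv_eq_ring_inverse hUopen
      ((hφ.differentiableOn one_ne_zero).mono subset_closure)
      (hφinv.differentiableOn one_ne_zero) hφU' (hinv.1.mono subset_closure) hGunit hx
    have hid : ContinuousLinearMap.id ℝ E =
        (G (φ x)).comp ((ContinuousLinearMap.id ℝ E).comp (Ring.inverse (G (φ x)))) :=
      (Ring.mul_inverse_cancel _ (hGunit _ (hφU' hx))).symm
    have hsub : HasFDerivAt (fun y => φinv (T (φ y)) - y) (_ - ContinuousLinearMap.id ℝ E) x :=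
      (contDiffAt_and_hasFDerivAt_conj hUopen hφ hφinv hφU hT hx).2.sub (hasFDerivAt_id x)
    rw [hsub.fderiv, hDφ, hid, ← dist_eq_norm']
    exact hT1 (φ x) (hφU' hx)

end FiniteDimensional

end NormedSpace

lemma C1Dist_le {n : ℕ} {U : Set (Euc n)} {ζ : Euc n → Euc n} {a b : ℝ} (ha : 0 ≤ a)
    (hb : 0 ≤ b) (h0 : ∀ x ∈ U, ‖ζ x - x‖ ≤ a)
    (h1 : ∀ x ∈ U, ‖fderiv ℝ ζ x - ContinuousLinearMap.id ℝ (Euc n)‖ ≤ b) :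
    C1Dist n U ζ id ≤ a + b :=
  add_le_add (Real.iSup_le (fun x => h0 x x.2) ha)
    (Real.iSup_le (fun x => by rw [fderiv_id]; exact h1 x x.2) hb)

/-- **Key lemma.** Let `U` be a bounded open set whose closure is C¹-diffeomorphic to a
closed ball `cl B(0,r)` via `φ` (with inverse `φinv`), `φ` mapping `U` onto `B(0,r)`, `r > 0`.
Let `μ > 0`, `O ⊆ U \ B_μ(∂U)` and `η > 0`. Then there is `ρ > 0` such that for each
`θ ∈ SO(n)` with `0 < ‖θ − id‖ < ρ` there is a diffeomorphism `ζ : U → U` with: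
(i) `ζ(B_{μ/4}(O)) ⊆ B_{μ/2}(O)` and `ζ = Ξ_θ := φ⁻¹ ∘ θ ∘ φ` on `B_{μ/4}(O)`;
(ii) `ζ = id` on `U \ B_{3μ/4}(O)`;
(iii) `‖ζ − id‖_{C¹(U)} ≤ η`. -/
theorem stmt_4 (n : ℕ) (U : Set (Euc n)) (hUopen : IsOpen U)
    (hUbd : Bornology.IsBounded U)
    (r : ℝ) (hr : 0 < r)
    (φ φinv : Euc n → Euc n)
    (hφ : ContDiffOn ℝ 1 φ (closure U))
    (hφinv : ContDiffOn ℝ 1 φinv (Metric.closedBall 0 r))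
    (hφbij : Set.BijOn φ (closure U) (Metric.closedBall 0 r))
    (hφinvOn : Set.InvOn φinv φ (closure U) (Metric.closedBall 0 r))
    (hφU : φ '' U = Metric.ball 0 r)
    (μ : ℝ) (hμ : 0 < μ)
    (O : Set (Euc n)) (hO : O ⊆ U \ Metric.thickening μ (frontier U))
    (η : ℝ) (hη : 0 < η) :
    ∃ ρ > 0, ∀ θ : Euc n ≃ₗᵢ[ℝ] Euc n, InSO n θ →
      0 < opDistId n θ → opDistId n θ < ρ →
      ∃ ζ ζinv : Euc n → Euc n,
        ContDiffOn ℝ 1 ζ U ∧ ContDiffOn ℝ 1 ζinv U ∧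
        Set.BijOn ζ U U ∧ Set.InvOn ζinv ζ U U ∧
        (ζ '' (Metric.thickening (μ/4) O) ⊆ Metric.thickening (μ/2) O) ∧
        (∀ y ∈ Metric.thickening (μ/4) O, ζ y = φinv (θ (φ y))) ∧
        (∀ y ∈ U \ Metric.thickening (3*μ/4) O, ζ y = y) ∧
        C1Dist n U ζ id ≤ η := by
  have hOU : thickening μ O ⊆ U := thickening_subset_of_subset_diff_thickening_frontier hUopen hO
  obtain ⟨ε, hε, hloc⟩ := exists_localized_homeomorph_of_C1_small hUopen
    (hUbd.subset fun x hx => (hO hx).1) hμ (half_pos hη) hOU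
  obtain ⟨ρ, hρ, hclose⟩ := mem_nhdsWithin_iff.1 (eventually_conj_sub_id_C1_small hr hUopen hφ
    hφinv (hφinvOn.1.mapsTo hφbij.surjOn) hφinvOn (hφU ▸ mapsTo_image φ U) hε)
  refine ⟨ρ, hρ, fun θ _ _ hθ => ?_⟩
  have hθmem : θ.toLinearIsometry.toContinuousLinearMap ∈
      ball (ContinuousLinearMap.id ℝ (Euc n)) ρ ∩ closedBall 0 1 :=
    ⟨by rw [mem_ball, dist_eq_norm]; exact hθ,
      mem_closedBall_zero_iff.2 θ.toLinearIsometry.norm_toContinuousLinearMap_le⟩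
  obtain ⟨hFC, hF⟩ := hclose hθmem
  obtain ⟨e, he, he_symm, hbij, himage, hconj, hfix, hsmall⟩ := hloc _ hFC hF
  refine ⟨e, e.symm, he.contDiffOn, he_symm.contDiffOn, hbij,
    ⟨fun x _ => e.symm_apply_apply x, fun x _ => e.apply_symm_apply x⟩, himage,
    fun y hy => (hconj y hy).trans (add_sub_cancel _ _), fun y hy => hfix y hy.2, ?_⟩
  exact (C1Dist_le (half_pos hη).le (half_pos hη).le (fun x _ => (hsmall x).1)
    (fun x _ => (hsmall x).2)).trans_eq (add_halves η)

end
end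

section
/- Let U ⊆ ℝⁿ be open, let φ : U → φ(U) ⊆ ℝⁿ be a C¹ diffeomorphism onto an open set, and let r > 0 be such that the closed ball cl(B(0,r)) ⊆ φ(U). Set V = φ⁻¹(B(0,r)). Then for every ε > 0 there exists ρ > 0 such that for every θ ∈ SO(n) with ‖θ − id‖ < ρ (operator norm), the map Ξ_θ := φ⁻¹ ∘ θ ∘ φ maps V onto V and satisfies ‖Ξ_θ − id‖_{C¹(V)} ≤ ε. Moreover, if in addition f : U → ℝⁿ is continuously differentiable with f and Df continuous and bounded on cl(V), then ρ can be chosen so that also ‖f ∘ Ξ_θ − f‖_{C¹(V)} ≤ ε. -/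
open MeasureTheory Metric Set

noncomputable section

/-! Let `K = cl B(0,r)`, `Ξ_A = φ⁻¹ ∘ A ∘ φ` and, for `g = id` or `g = f`, `h = g ∘ φ⁻¹`, so
that `g ∘ Ξ_A = h ∘ A ∘ φ`. At `y = φ x` the value `h (A y)` and the chain-rule derivative
`Dh(A y) ∘ A ∘ Dφ(φ⁻¹ y)` of `g ∘ Ξ_A` are jointly continuous in `(A, y)` on
`{A | A K ⊆ K} × K` and equal `g x`, `Dg(x)` at `A = id`. Since `K` is compact, they converge
to these uniformly in `y` as `A → id`, and rotations preserve `K`. -/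

open Filter Topology

theorem IsCompact.eventually_forall_dist_lt_of_continuousOn_prod {P E X : Type*}
    [TopologicalSpace P] [TopologicalSpace E] [PseudoMetricSpace X] {K : Set E}
    (hK : IsCompact K) {s : Set P} {p₀ : P} (hp₀ : p₀ ∈ s) {G : P → E → X}
    (hG : ContinuousOn (Function.uncurry G) (s ×ˢ K)) {ε : ℝ} (hε : 0 < ε) :
    ∀ᶠ p in 𝓝[s] p₀, ∀ y ∈ K, dist (G p y) (G p₀ y) < ε := by
  obtain ⟨v, hv, hvG⟩ := hK.mem_uniformity_of_prod hG hp₀ (dist_mem_uniformity hε)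
  exact mem_of_superset hv hvG

theorem Set.image_conj_eq {α β : Type*} {φ : α → β} {φinv : β → α} {U : Set α} {B : Set β}
    (hinv : InvOn φinv φ U (φ '' U)) (hB : B ⊆ φ '' U) {T : β → β} (hT : BijOn T B B) :
    (fun x => φinv (T (φ x))) '' (U ∩ φ ⁻¹' B) = U ∩ φ ⁻¹' B := by
  have hφ : BijOn φ (U ∩ φ ⁻¹' B) B := by
    refine ⟨fun x hx => hx.2, hinv.1.injOn.mono inter_subset_left, fun y hy => ?_⟩
    obtain ⟨x, hx, rfl⟩ := hB hy
    exact ⟨x, ⟨hx, hy⟩, rfl⟩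
  have hφinv : BijOn φinv B (U ∩ φ ⁻¹' B) :=
    hφ.symm (hinv.mono inter_subset_left hB).symm
  exact ((hφinv.comp hT).comp hφ).image_eq

section

variable {E F : Type*} [NormedAddCommGroup E] [NormedSpace ℝ E]
  [NormedAddCommGroup F] [NormedSpace ℝ F]

theorem fderiv_comp_clm_comp {h : E → F} {φ : E → E} (A : E →L[ℝ] E) {x : E}
    (hh : DifferentiableAt ℝ h (A (φ x))) (hφ : DifferentiableAt ℝ φ x) :
    fderiv ℝ (fun y => h (A (φ y))) x =
      (fderiv ℝ h (A (φ x))).comp (A.comp (fderiv ℝ φ x)) :=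
  (hh.hasFDerivAt.comp x (A.hasFDerivAt.comp x hφ.hasFDerivAt)).fderiv

theorem ContinuousOn.comp_clm_apply {X : Type*} [TopologicalSpace X] {K : Set E} {h : E → X}
    (hh : ContinuousOn h K) :
    ContinuousOn (fun q : (E →L[ℝ] E) × E => h (q.1 q.2))
      ({A : E →L[ℝ] E | MapsTo A K K} ×ˢ K) :=
  hh.comp (continuous_fst.clm_apply continuous_snd).continuousOn fun _ hq => hq.1 hq.2

theorem eventually_norm_comp_conj_sub_lt {U K : Set E} {φ φinv : E → E} {g : E → F}
    (hU : IsOpen U) (hφ : ContDiffOn ℝ 1 φ U) (hW : IsOpen (φ '' U))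
    (hφinv : ContDiffOn ℝ 1 φinv (φ '' U)) (hinv : InvOn φinv φ U (φ '' U))
    (hK : IsCompact K) (hKW : K ⊆ φ '' U) (hg : ContDiffOn ℝ 1 g U) {ε : ℝ} (hε : 0 < ε) :
    ∀ᶠ A in 𝓝[{A : E →L[ℝ] E | MapsTo A K K}] ContinuousLinearMap.id ℝ E,
      ∀ x ∈ U ∩ φ ⁻¹' K,
      ‖g (φinv (A (φ x))) - g x‖ < ε ∧
      ‖fderiv ℝ (g ∘ fun y => φinv (A (φ y))) x - fderiv ℝ g x‖ < ε := by
  set h := g ∘ φinv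
  have hh : ContDiffOn ℝ 1 h (φ '' U) := hg.comp hφinv (hinv.1.mapsTo (surjOn_image φ U))
  have hφ' : ContinuousOn (fderiv ℝ φ) U := hφ.continuousOn_fderiv_of_isOpen hU le_rfl
  have hh' : ContinuousOn (fderiv ℝ h) (φ '' U) := hh.continuousOn_fderiv_of_isOpen hW le_rfl
  have hφinvK : MapsTo φinv K U := (hinv.1.mapsTo (surjOn_image φ U)).mono_left hKW
  have hidK : MapsTo (ContinuousLinearMap.id ℝ E) K K := fun _ hy => hy
  have hval := hK.eventually_forall_dist_lt_of_continuousOn_prod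
    (G := fun (A : E →L[ℝ] E) y => h (A y)) hidK (hh.continuousOn.mono hKW).comp_clm_apply hε
  have hDφ : ContinuousOn (fun q : (E →L[ℝ] E) × E => fderiv ℝ φ (φinv q.2))
      ({A : E →L[ℝ] E | MapsTo A K K} ×ˢ K) :=
    (hφ'.comp (hφinv.continuousOn.mono hKW) hφinvK).comp continuousOn_snd fun _ hq => hq.2
  have hder := hK.eventually_forall_dist_lt_of_continuousOn_prod
    (G := fun (A : E →L[ℝ] E) y => (fderiv ℝ h (A y)).comp (A.comp (fderiv ℝ φ (φinv y))))
    hidK ((hh'.mono hKW).comp_clm_apply.clm_comp (continuousOn_fst.clm_comp hDφ)) hε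
  filter_upwards [hval, hder, self_mem_nhdsWithin] with A hAval hAder hA x ⟨hxU, hxK⟩
  have hφx : DifferentiableAt ℝ φ x :=
    (hφ.differentiableOn one_ne_zero).differentiableAt (hU.mem_nhds hxU)
  have hhd : ∀ y ∈ K, DifferentiableAt ℝ h y := fun y hy =>
    (hh.differentiableOn one_ne_zero).differentiableAt (hW.mem_nhds (hKW hy))
  have hgx : fderiv ℝ g x = (fderiv ℝ h (φ x)).comp (fderiv ℝ φ x) := by
    have hgh : h ∘ φ =ᶠ[𝓝 x] g :=
      eventually_of_mem (hU.mem_nhds hxU) fun z hz => congrArg g (hinv.1 hz)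
    rw [← hgh.fderiv_eq]
    exact fderiv_comp_clm_comp (ContinuousLinearMap.id ℝ E) (hhd _ hxK) hφx
  constructor
  · simpa [h, hinv.1 hxU, dist_eq_norm] using hAval (φ x) hxK
  · rw [show g ∘ (fun y => φinv (A (φ y))) = fun y => h (A (φ y)) from rfl,
      fderiv_comp_clm_comp A (hhd _ (hA hxK)) hφx, hgx, ← dist_eq_norm]
    simpa [hinv.1 hxU] using hAder (φ x) hxK

end

theorem C1Dist_le_add {n : ℕ} {V : Set (Euc n)} {f g : Euc n → Euc n} {a b : ℝ}
    (ha : 0 ≤ a) (hb : 0 ≤ b) (h₀ : ∀ x ∈ V, ‖f x - g x‖ ≤ a)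
    (h₁ : ∀ x ∈ V, ‖fderiv ℝ f x - fderiv ℝ g x‖ ≤ b) : C1Dist n V f g ≤ a + b :=
  add_le_add (Real.iSup_le (fun x => h₀ x x.2) ha) (Real.iSup_le (fun x => h₁ x x.2) hb)

theorem stmt_12_general (n : ℕ) (U : Set (Euc n)) (hU : IsOpen U)
    (φ φinv : Euc n → Euc n)
    (hφ : ContDiffOn ℝ 1 φ U)
    (hφim : IsOpen (φ '' U))
    (hφinv : ContDiffOn ℝ 1 φinv (φ '' U))
    (hinv : Set.InvOn φinv φ U (φ '' U))
    (r : ℝ) (hball : Metric.closedBall (0 : Euc n) r ⊆ φ '' U)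
    (V : Set (Euc n)) (hV : V = U ∩ φ ⁻¹' Metric.ball (0 : Euc n) r)
    (f : Euc n → Euc n) (hf : ContDiffOn ℝ 1 f U)
    (ε : ℝ) (hε : 0 < ε) :
    ∃ ρ > 0, ∀ θ : Euc n ≃ₗᵢ[ℝ] Euc n, InSO n θ → opDistId n θ < ρ →
      (fun y => φinv (θ (φ y))) '' V = V ∧
      C1Dist n V (fun y => φinv (θ (φ y))) id ≤ ε ∧
      C1Dist n V (f ∘ fun y => φinv (θ (φ y))) f ≤ ε := by
  have hK := isCompact_closedBall (0 : Euc n) r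
  have hε2 : 0 < ε / 2 := half_pos hε
  have hnear := (eventually_norm_comp_conj_sub_lt hU hφ hφim hφinv hinv hK hball
    contDiffOn_id hε2).and
    (eventually_norm_comp_conj_sub_lt hU hφ hφim hφinv hinv hK hball hf hε2)
  obtain ⟨ρ, hρ, hρnear⟩ := Metric.eventually_nhds_iff.1 (eventually_nhdsWithin_iff.1 hnear)
  refine ⟨ρ, hρ, fun θ _ hθ => ?_⟩
  have hθK : MapsTo θ (closedBall 0 r) (closedBall 0 r) := fun y hy => by simpa using hy
  have hθρ : dist θ.toLinearIsometry.toContinuousLinearMap (ContinuousLinearMap.id ℝ _) < ρ := by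
    rwa [dist_eq_norm]
  have hθ := hρnear hθρ hθK
  have hθB : BijOn θ (ball 0 r) (ball 0 r) := by
    have := θ.injective.injOn.bijOn_image (s := ball (0 : Euc n) r)
    rwa [θ.image_ball, θ.map_zero] at this
  have hVK : V ⊆ U ∩ φ ⁻¹' closedBall 0 r :=
    hV ▸ inter_subset_inter_right U (preimage_mono ball_subset_closedBall)
  refine ⟨hV ▸ image_conj_eq hinv (ball_subset_closedBall.trans hball) hθB, ?_, ?_⟩
  · refine (C1Dist_le_add hε2.le hε2.le (fun x hx => ?_) fun x hx => ?_).trans_eq (add_halves ε)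
    · exact (hθ.1 x (hVK hx)).1.le
    · exact (hθ.1 x (hVK hx)).2.le
  · refine (C1Dist_le_add hε2.le hε2.le (fun x hx => ?_) fun x hx => ?_).trans_eq (add_halves ε)
    · exact (hθ.2 x (hVK hx)).1.le
    · exact (hθ.2 x (hVK hx)).2.le

/-- For a C¹ diffeomorphism `φ` of an open set `U` onto an open set containing the closed ball
`cl B(0,r)` and `V = φ⁻¹(B(0,r))`: for every `ε > 0` there is `ρ > 0` such that each
`θ ∈ SO(n)` with `‖θ − id‖ < ρ` yields `Ξ_θ = φ⁻¹ ∘ θ ∘ φ` mapping `V` onto `V` with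
`‖Ξ_θ − id‖_{C¹(V)} ≤ ε`; moreover, given a C¹ map `f` with `f` and `Df` continuous and
bounded on `cl V`, also `‖f ∘ Ξ_θ − f‖_{C¹(V)} ≤ ε`. -/
theorem stmt_12 (n : ℕ) (U : Set (Euc n)) (hU : IsOpen U)
    (φ φinv : Euc n → Euc n)
    (hφ : ContDiffOn ℝ 1 φ U) (hφinj : Set.InjOn φ U)
    (hφim : IsOpen (φ '' U))
    (hφinv : ContDiffOn ℝ 1 φinv (φ '' U))
    (hinv : Set.InvOn φinv φ U (φ '' U))
    (r : ℝ) (hr : 0 < r) (hball : Metric.closedBall (0 : Euc n) r ⊆ φ '' U)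
    (V : Set (Euc n)) (hV : V = U ∩ φ ⁻¹' Metric.ball (0 : Euc n) r)
    (f : Euc n → Euc n) (hf : ContDiffOn ℝ 1 f U)
    (hfc : ContinuousOn f (closure V))
    (hfdc : ContinuousOn (fderiv ℝ f) (closure V))
    (hfbdd : ∃ M : ℝ, ∀ x ∈ closure V, ‖f x‖ ≤ M ∧ ‖fderiv ℝ f x‖ ≤ M)
    (ε : ℝ) (hε : 0 < ε) :
    ∃ ρ > 0, ∀ θ : Euc n ≃ₗᵢ[ℝ] Euc n, InSO n θ → opDistId n θ < ρ →
      (fun y => φinv (θ (φ y))) '' V = V ∧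
      C1Dist n V (fun y => φinv (θ (φ y))) id ≤ ε ∧
      C1Dist n V (f ∘ fun y => φinv (θ (φ y))) f ≤ ε :=
  stmt_12_general n U hU φ φinv hφ hφim hφinv hinv r hball V hV f hf ε hε

end
end
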